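/- Let M, N ≥ 1 and let ψ : ℝ³ → Mat_{M,N}(ℝ), φ : ℝ³ → Mat_{N,M}(ℝ) be smooth functions of (x, y, t) satisfying the matrix derivative NLS system ψ_y = ψ_xx + 2ψ_xφψ, φ_y = −φ_xx + 2φψφ_x, together with its third-order symmetry ψ_t = ψ_xxx + 3ψ_xxφψ + 3ψ_xφψ_x + 3ψ_xφψφψ, φ_t = φ_xxx − 3φψφ_xx − 3φ_xψφ_x + 3φψφψφ_x. Then the M×M-matrix-valued functions u := −2ψ_xφ and q := 2ψ_xφ_x − 2ψ_xxφ − 4ψ_xφψφ satisfy the matrix Kadomtsev–Petviashvili equation 4u_t = u_xxx − 3(uu_x + u_x u − q_y + [q,u]) together with the constraint q_x = u_y; moreover ψ satisfies ψ_y = ψ_xx − uψ and ψ_t = ψ_xxx − (3/2)uψ_x − (3/4)(u_x + q)ψ. -/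

import Mathlib

noncomputable def pdx {V : Type*} [NormedAddCommGroup V] [NormedSpace ℝ V]
    (f : ℝ → ℝ → ℝ → V) : ℝ → ℝ → ℝ → V :=
  fun x y t => deriv (fun s => f s y t) x

noncomputable def pdy {V : Type*} [NormedAddCommGroup V] [NormedSpace ℝ V]
    (f : ℝ → ℝ → ℝ → V) : ℝ → ℝ → ℝ → V :=
  fun x y t => deriv (fun s => f x s t) y

noncomputable def pdt {V : Type*} [NormedAddCommGroup V] [NormedSpace ℝ V]
    (f : ℝ → ℝ → ℝ → V) : ℝ → ℝ → ℝ → V :=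
  fun x y t => deriv (fun s => f x y s) t

def mmul {M N K : ℕ} (A : Fin M → Fin N → ℝ) (B : Fin N → Fin K → ℝ) :
    Fin M → Fin K → ℝ :=
  fun i k => ∑ j, A i j * B j k

def idm {M : ℕ} : Fin M → Fin M → ℝ := fun i j => if i = j then (1 : ℝ) else 0

def mcomm {M : ℕ} (A B : Fin M → Fin M → ℝ) : Fin M → Fin M → ℝ :=
  mmul A B - mmul B A

noncomputable def minv {M : ℕ} (A : Fin M → Fin M → ℝ) : Fin M → Fin M → ℝ :=
  (Matrix.of A)⁻¹

section Framework
variable {V : Type*} [NormedAddCommGroup V] [NormedSpace ℝ V]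
variable {f : ℝ → ℝ → ℝ → V}

def unc3 (f : ℝ → ℝ → ℝ → V) : ℝ × ℝ × ℝ → V := fun p => f p.1 p.2.1 p.2.2

def Sm3 (f : ℝ → ℝ → ℝ → V) : Prop := ContDiff ℝ (⊤ : ℕ∞) (unc3 f)

lemma Sm3.hasX (hf : Sm3 f) (x y t : ℝ) :
    HasDerivAt (fun s => f s y t) (pdx f x y t) x := by
  have hd : DifferentiableAt ℝ (fun s => f s y t) x := by
    have h := DifferentiableAt.comp x (hf.differentiable (by simp) (x, y, t))
      ((differentiableAt_id.prodMk (differentiableAt_const (y, t))) : DifferentiableAt ℝ (fun s : ℝ => ((s, y, t) : ℝ × ℝ × ℝ)) x); exact h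
  exact hd.hasDerivAt

lemma Sm3.hasY (hf : Sm3 f) (x y t : ℝ) :
    HasDerivAt (fun s => f x s t) (pdy f x y t) y := by
  have hd : DifferentiableAt ℝ (fun s => f x s t) y := by
    have h := DifferentiableAt.comp y (hf.differentiable (by simp) (x, y, t))
      (((differentiableAt_const x).prodMk (differentiableAt_id.prodMk (differentiableAt_const t))) : DifferentiableAt ℝ (fun s : ℝ => ((x, s, t) : ℝ × ℝ × ℝ)) y); exact h
  exact hd.hasDerivAt

lemma Sm3.hasT (hf : Sm3 f) (x y t : ℝ) :
    HasDerivAt (fun s => f x y s) (pdt f x y t) t := by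
  have hd := DifferentiableAt.comp t (hf.differentiable (by simp) (x, y, t))
      (((differentiableAt_const x).prodMk ((differentiableAt_const y).prodMk differentiableAt_id)) : DifferentiableAt ℝ (fun s : ℝ => ((x, y, s) : ℝ × ℝ × ℝ)) t)
  exact hd.hasDerivAt

lemma Sm3.pdx_eq (hf : Sm3 f) (x y t : ℝ) :
    pdx f x y t = fderiv ℝ (unc3 f) (x, y, t) (1, 0, 0) := by
  have hl : HasDerivAt (fun s : ℝ => ((s, y, t) : ℝ × ℝ × ℝ)) (1, 0, 0) x :=
    (hasDerivAt_id x).prodMk (hasDerivAt_const x (y, t))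
  have h := ((hf.differentiable (by simp) (x, y, t)).hasFDerivAt).comp_hasDerivAt x hl
  exact h.deriv

lemma Sm3.pdy_eq (hf : Sm3 f) (x y t : ℝ) :
    pdy f x y t = fderiv ℝ (unc3 f) (x, y, t) (0, 1, 0) := by
  have hl : HasDerivAt (fun s : ℝ => ((x, s, t) : ℝ × ℝ × ℝ)) (0, 1, 0) y :=
    (hasDerivAt_const y x).prodMk ((hasDerivAt_id y).prodMk (hasDerivAt_const y t))
  have h := ((hf.differentiable (by simp) (x, y, t)).hasFDerivAt).comp_hasDerivAt y hl
  exact h.deriv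

lemma Sm3.pdt_eq (hf : Sm3 f) (x y t : ℝ) :
    pdt f x y t = fderiv ℝ (unc3 f) (x, y, t) (0, 0, 1) := by
  have hl : HasDerivAt (fun s : ℝ => ((x, y, s) : ℝ × ℝ × ℝ)) (0, 0, 1) t :=
    (hasDerivAt_const t x).prodMk ((hasDerivAt_const t y).prodMk (hasDerivAt_id t))
  have h := ((hf.differentiable (by simp) (x, y, t)).hasFDerivAt).comp_hasDerivAt t hl
  exact h.deriv

lemma Sm3.pdv (hf : Sm3 f) (v : ℝ × ℝ × ℝ) :
    ContDiff ℝ (⊤ : ℕ∞) (fun p : ℝ × ℝ × ℝ => fderiv ℝ (unc3 f) p v) := by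
  have h1 : ContDiff ℝ (((⊤ : ℕ∞) : WithTop ℕ∞)) (fderiv ℝ (unc3 f)) :=
    hf.fderiv_right (by simp)
  exact h1.clm_apply contDiff_const

lemma Sm3.pdx' (hf : Sm3 f) : Sm3 (pdx f) := by
  have e : unc3 (pdx f) = fun p : ℝ × ℝ × ℝ => fderiv ℝ (unc3 f) p (1, 0, 0) :=
    funext fun p => hf.pdx_eq p.1 p.2.1 p.2.2
  rw [Sm3, e]
  exact hf.pdv _

lemma sym_aux {F : ℝ × ℝ × ℝ → V} (hF : ContDiff ℝ (⊤ : ℕ∞) F) (p v w : ℝ × ℝ × ℝ) :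
    fderiv ℝ (fun q => fderiv ℝ F q v) p w = fderiv ℝ (fun q => fderiv ℝ F q w) p v := by
  have hd : DifferentiableAt ℝ (fderiv ℝ F) p :=
    by
      have h1 : ContDiff ℝ (((⊤ : ℕ∞) : WithTop ℕ∞)) (fderiv ℝ F) := hF.fderiv_right (by simp)
      exact (h1.differentiable (by simp)) p
  have h1 : ∀ a b : ℝ × ℝ × ℝ, fderiv ℝ (fun q => fderiv ℝ F q a) p b
      = fderiv ℝ (fderiv ℝ F) p b a := by
    intro a b
    rw [fderiv_clm_apply hd (differentiableAt_const a)]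
    simp
  rw [h1, h1]
  exact (hF.contDiffAt.isSymmSndFDerivAt (by simp; exact WithTop.coe_le_coe.mpr le_top)).eq w v

lemma Sm3.schwarz_xy (hf : Sm3 f) (x y t : ℝ) :
    pdy (pdx f) x y t = pdx (pdy f) x y t := by
  have e1 : unc3 (pdx f) = fun p : ℝ × ℝ × ℝ => fderiv ℝ (unc3 f) p (1, 0, 0) :=
    funext fun p => hf.pdx_eq p.1 p.2.1 p.2.2
  have e2 : unc3 (pdy f) = fun p : ℝ × ℝ × ℝ => fderiv ℝ (unc3 f) p (0, 1, 0) :=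
    funext fun p => hf.pdy_eq p.1 p.2.1 p.2.2
  have hpx : Sm3 (pdx f) := hf.pdx'
  have hpy : Sm3 (pdy f) := by rw [Sm3, e2]; exact hf.pdv _
  rw [hpx.pdy_eq, hpy.pdx_eq, e1, e2]
  exact sym_aux hf _ _ _

lemma Sm3.schwarz_xt (hf : Sm3 f) (x y t : ℝ) :
    pdt (pdx f) x y t = pdx (pdt f) x y t := by
  have e1 : unc3 (pdx f) = fun p : ℝ × ℝ × ℝ => fderiv ℝ (unc3 f) p (1, 0, 0) :=
    funext fun p => hf.pdx_eq p.1 p.2.1 p.2.2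
  have e2 : unc3 (pdt f) = fun p : ℝ × ℝ × ℝ => fderiv ℝ (unc3 f) p (0, 0, 1) :=
    funext fun p => hf.pdt_eq p.1 p.2.1 p.2.2
  have hpx : Sm3 (pdx f) := hf.pdx'
  have hpt : Sm3 (pdt f) := by rw [Sm3, e2]; exact hf.pdv _
  rw [hpx.pdt_eq, hpt.pdx_eq, e1, e2]
  exact sym_aux hf _ _ _

end Framework

lemma HasDerivAt.mmul {Mn Nn Kn : ℕ} {f : ℝ → Fin Mn → Fin Nn → ℝ}
    {g : ℝ → Fin Nn → Fin Kn → ℝ} {f' g'} {x : ℝ}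
    (hf : HasDerivAt f f' x) (hg : HasDerivAt g g' x) :
    HasDerivAt (fun s => mmul (f s) (g s)) (mmul f' (g x) + mmul (f x) g') x := by
  rw [hasDerivAt_pi]
  intro i
  rw [hasDerivAt_pi]
  intro k
  have h : HasDerivAt (fun s => ∑ j, f s i j * g s j k)
      (∑ j : Fin Nn, (f' i j * g x j k + f x i j * g' j k)) x :=
    HasDerivAt.fun_sum fun j _ =>
      (hasDerivAt_pi.mp (hasDerivAt_pi.mp hf i) j).mul (hasDerivAt_pi.mp (hasDerivAt_pi.mp hg j) k)
  simpa [_root_.mmul, Finset.sum_add_distrib] using h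

section MmulAlg
variable {Mn Nn Kn Ln : ℕ}

lemma mmul_add (A : Fin Mn → Fin Nn → ℝ) (B C : Fin Nn → Fin Kn → ℝ) :
    mmul A (B + C) = mmul A B + mmul A C := by
  funext i k
  simp [mmul, mul_add, Finset.sum_add_distrib]

lemma add_mmul (A B : Fin Mn → Fin Nn → ℝ) (C : Fin Nn → Fin Kn → ℝ) :
    mmul (A + B) C = mmul A C + mmul B C := by
  funext i k
  simp [mmul, add_mul, Finset.sum_add_distrib]

lemma mmul_smul (c : ℝ) (A : Fin Mn → Fin Nn → ℝ) (B : Fin Nn → Fin Kn → ℝ) :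
    mmul A (c • B) = c • mmul A B := by
  funext i k
  simp [mmul, Finset.mul_sum, mul_left_comm]

lemma smul_mmul (c : ℝ) (A : Fin Mn → Fin Nn → ℝ) (B : Fin Nn → Fin Kn → ℝ) :
    mmul (c • A) B = c • mmul A B := by
  funext i k
  simp [mmul, Finset.mul_sum, mul_assoc]

lemma mmul_sub (A : Fin Mn → Fin Nn → ℝ) (B C : Fin Nn → Fin Kn → ℝ) :
    mmul A (B - C) = mmul A B - mmul A C := by
  funext i k
  simp [mmul, mul_sub, Finset.sum_sub_distrib]

lemma sub_mmul (A B : Fin Mn → Fin Nn → ℝ) (C : Fin Nn → Fin Kn → ℝ) :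
    mmul (A - B) C = mmul A C - mmul B C := by
  funext i k
  simp [mmul, sub_mul, Finset.sum_sub_distrib]

lemma mmul_neg (A : Fin Mn → Fin Nn → ℝ) (B : Fin Nn → Fin Kn → ℝ) :
    mmul A (-B) = -mmul A B := by
  funext i k
  simp [mmul]

lemma neg_mmul (A : Fin Mn → Fin Nn → ℝ) (B : Fin Nn → Fin Kn → ℝ) :
    mmul (-A) B = -mmul A B := by
  funext i k
  simp [mmul]

lemma mmul_assoc (A : Fin Mn → Fin Nn → ℝ) (B : Fin Nn → Fin Kn → ℝ)
    (C : Fin Kn → Fin Ln → ℝ) : mmul (mmul A B) C = mmul A (mmul B C) := by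
  funext i l
  simp only [mmul, Finset.sum_mul, Finset.mul_sum]
  rw [Finset.sum_comm]
  simp [mul_assoc]

end MmulAlg

theorem matrix_DNLS_gives_matrix_KP (M N : ℕ) (hM : 1 ≤ M) (hN : 1 ≤ N)
    (ψ : ℝ → ℝ → ℝ → (Fin M → Fin N → ℝ)) (φ : ℝ → ℝ → ℝ → (Fin N → Fin M → ℝ))
    (hψ : ContDiff ℝ (⊤ : ℕ∞) (fun p : ℝ × ℝ × ℝ => ψ p.1 p.2.1 p.2.2))
    (hφ : ContDiff ℝ (⊤ : ℕ∞) (fun p : ℝ × ℝ × ℝ => φ p.1 p.2.1 p.2.2))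
    (hDNLS₁ : ∀ x y t, pdy ψ x y t =
      pdx (pdx ψ) x y t + (2 : ℝ) • mmul (mmul (pdx ψ x y t) (φ x y t)) (ψ x y t))
    (hDNLS₂ : ∀ x y t, pdy φ x y t =
      -pdx (pdx φ) x y t + (2 : ℝ) • mmul (mmul (φ x y t) (ψ x y t)) (pdx φ x y t))
    (hSym₁ : ∀ x y t, pdt ψ x y t = pdx (pdx (pdx ψ)) x y t
        + (3 : ℝ) • mmul (mmul (pdx (pdx ψ) x y t) (φ x y t)) (ψ x y t)
        + (3 : ℝ) • mmul (mmul (pdx ψ x y t) (φ x y t)) (pdx ψ x y t)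
        + (3 : ℝ) • mmul (mmul (mmul (mmul (pdx ψ x y t) (φ x y t)) (ψ x y t)) (φ x y t)) (ψ x y t))
    (hSym₂ : ∀ x y t, pdt φ x y t = pdx (pdx (pdx φ)) x y t
        - (3 : ℝ) • mmul (mmul (φ x y t) (ψ x y t)) (pdx (pdx φ) x y t)
        - (3 : ℝ) • mmul (mmul (pdx φ x y t) (ψ x y t)) (pdx φ x y t)
        + (3 : ℝ) • mmul (mmul (mmul (mmul (φ x y t) (ψ x y t)) (φ x y t)) (ψ x y t)) (pdx φ x y t))
    (u q : ℝ → ℝ → ℝ → (Fin M → Fin M → ℝ))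
    (hu : ∀ x y t, u x y t = (-2 : ℝ) • mmul (pdx ψ x y t) (φ x y t))
    (hq : ∀ x y t, q x y t =
      (2 : ℝ) • mmul (pdx ψ x y t) (pdx φ x y t)
        - (2 : ℝ) • mmul (pdx (pdx ψ) x y t) (φ x y t)
        - (4 : ℝ) • mmul (mmul (mmul (pdx ψ x y t) (φ x y t)) (ψ x y t)) (φ x y t)) :
    (∀ x y t, (4 : ℝ) • pdt u x y t =
      pdx (pdx (pdx u)) x y t
        - (3 : ℝ) • (mmul (u x y t) (pdx u x y t) + mmul (pdx u x y t) (u x y t)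
            - pdy q x y t + mcomm (q x y t) (u x y t))) ∧
    (∀ x y t, pdx q x y t = pdy u x y t) ∧
    (∀ x y t, pdy ψ x y t = pdx (pdx ψ) x y t - mmul (u x y t) (ψ x y t)) ∧
    (∀ x y t, pdt ψ x y t = pdx (pdx (pdx ψ)) x y t
        - (3 / 2 : ℝ) • mmul (u x y t) (pdx ψ x y t)
        - (3 / 4 : ℝ) • mmul (pdx u x y t + q x y t) (ψ x y t)) := by
  
  have Hψ : Sm3 ψ := hψ
  have Hφ : Sm3 φ := hφ
  have Hψ1 : Sm3 (pdx ψ) := Hψ.pdx'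
  have Hψ2 : Sm3 (pdx (pdx ψ)) := Hψ1.pdx'
  have Hψ3 : Sm3 (pdx (pdx (pdx ψ))) := Hψ2.pdx'
  have Hφ1 : Sm3 (pdx φ) := Hφ.pdx'
  have Hφ2 : Sm3 (pdx (pdx φ)) := Hφ1.pdx'
  have hux : ∀ x y t : ℝ, pdx (u) x y t = ((-2 : ℝ) • ((mmul (pdx (pdx ψ) x y t) (φ x y t)) + (mmul (pdx ψ x y t) (pdx φ x y t)))) := by
    intro x y t
    have e : (fun s => (u) s y t) = (fun s => ((-2 : ℝ) • (mmul (pdx ψ s y t) (φ s y t)))) :=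
      funext fun s => hu s y t
    show deriv (fun s => (u) s y t) x = _
    rw [e]
    exact (((Hψ1.hasX x y t).mmul (Hφ.hasX x y t)).const_smul (-2 : ℝ)).deriv

  have huxx : ∀ x y t : ℝ, pdx (pdx u) x y t = ((-2 : ℝ) • (((mmul (pdx (pdx (pdx ψ)) x y t) (φ x y t)) + (mmul (pdx (pdx ψ) x y t) (pdx φ x y t))) + ((mmul (pdx (pdx ψ) x y t) (pdx φ x y t)) + (mmul (pdx ψ x y t) (pdx (pdx φ) x y t))))) := by
    intro x y t
    have e : (fun s => (pdx u) s y t) = (fun s => ((-2 : ℝ) • ((mmul (pdx (pdx ψ) s y t) (φ s y t)) + (mmul (pdx ψ s y t) (pdx φ s y t))))) :=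
      funext fun s => hux s y t
    show deriv (fun s => (pdx u) s y t) x = _
    rw [e]
    exact ((((Hψ2.hasX x y t).mmul (Hφ.hasX x y t)).add ((Hψ1.hasX x y t).mmul (Hφ1.hasX x y t))).const_smul (-2 : ℝ)).deriv

  have huxxx : ∀ x y t : ℝ, pdx (pdx (pdx u)) x y t = ((-2 : ℝ) • ((((mmul (pdx (pdx (pdx (pdx ψ))) x y t) (φ x y t)) + (mmul (pdx (pdx (pdx ψ)) x y t) (pdx φ x y t))) + ((mmul (pdx (pdx (pdx ψ)) x y t) (pdx φ x y t)) + (mmul (pdx (pdx ψ) x y t) (pdx (pdx φ) x y t)))) + (((mmul (pdx (pdx (pdx ψ)) x y t) (pdx φ x y t)) + (mmul (pdx (pdx ψ) x y t) (pdx (pdx φ) x y t))) + ((mmul (pdx (pdx ψ) x y t) (pdx (pdx φ) x y t)) + (mmul (pdx ψ x y t) (pdx (pdx (pdx φ)) x y t)))))) := by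
    intro x y t
    have e : (fun s => (pdx (pdx u)) s y t) = (fun s => ((-2 : ℝ) • (((mmul (pdx (pdx (pdx ψ)) s y t) (φ s y t)) + (mmul (pdx (pdx ψ) s y t) (pdx φ s y t))) + ((mmul (pdx (pdx ψ) s y t) (pdx φ s y t)) + (mmul (pdx ψ s y t) (pdx (pdx φ) s y t)))))) :=
      funext fun s => huxx s y t
    show deriv (fun s => (pdx (pdx u)) s y t) x = _
    rw [e]
    exact (((((Hψ3.hasX x y t).mmul (Hφ.hasX x y t)).add ((Hψ2.hasX x y t).mmul (Hφ1.hasX x y t))).add (((Hψ2.hasX x y t).mmul (Hφ1.hasX x y t)).add ((Hψ1.hasX x y t).mmul (Hφ2.hasX x y t)))).const_smul (-2 : ℝ)).deriv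

  have huy : ∀ x y t : ℝ, pdy (u) x y t = ((-2 : ℝ) • ((mmul (pdy (pdx ψ) x y t) (φ x y t)) + (mmul (pdx ψ x y t) (pdy φ x y t)))) := by
    intro x y t
    have e : (fun s => (u) x s t) = (fun s => ((-2 : ℝ) • (mmul (pdx ψ x s t) (φ x s t)))) :=
      funext fun s => hu x s t
    show deriv (fun s => (u) x s t) y = _
    rw [e]
    exact (((Hψ1.hasY x y t).mmul (Hφ.hasY x y t)).const_smul (-2 : ℝ)).deriv

  have hut : ∀ x y t : ℝ, pdt (u) x y t = ((-2 : ℝ) • ((mmul (pdt (pdx ψ) x y t) (φ x y t)) + (mmul (pdx ψ x y t) (pdt φ x y t)))) := by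
    intro x y t
    have e : (fun s => (u) x y s) = (fun s => ((-2 : ℝ) • (mmul (pdx ψ x y s) (φ x y s)))) :=
      funext fun s => hu x y s
    show deriv (fun s => (u) x y s) t = _
    rw [e]
    exact (((Hψ1.hasT x y t).mmul (Hφ.hasT x y t)).const_smul (-2 : ℝ)).deriv

  have hqx : ∀ x y t : ℝ, pdx (q) x y t = ((((2 : ℝ) • ((mmul (pdx (pdx ψ) x y t) (pdx φ x y t)) + (mmul (pdx ψ x y t) (pdx (pdx φ) x y t)))) - ((2 : ℝ) • ((mmul (pdx (pdx (pdx ψ)) x y t) (φ x y t)) + (mmul (pdx (pdx ψ) x y t) (pdx φ x y t))))) - ((4 : ℝ) • ((mmul ((mmul ((mmul (pdx (pdx ψ) x y t) (φ x y t)) + (mmul (pdx ψ x y t) (pdx φ x y t))) (ψ x y t)) + (mmul (mmul (pdx ψ x y t) (φ x y t)) (pdx ψ x y t))) (φ x y t)) + (mmul (mmul (mmul (pdx ψ x y t) (φ x y t)) (ψ x y t)) (pdx φ x y t))))) := by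
    intro x y t
    have e : (fun s => (q) s y t) = (fun s => ((((2 : ℝ) • (mmul (pdx ψ s y t) (pdx φ s y t))) - ((2 : ℝ) • (mmul (pdx (pdx ψ) s y t) (φ s y t)))) - ((4 : ℝ) • (mmul (mmul (mmul (pdx ψ s y t) (φ s y t)) (ψ s y t)) (φ s y t))))) :=
      funext fun s => hq s y t
    show deriv (fun s => (q) s y t) x = _
    rw [e]
    exact (((((Hψ1.hasX x y t).mmul (Hφ1.hasX x y t)).const_smul (2 : ℝ)).sub (((Hψ2.hasX x y t).mmul (Hφ.hasX x y t)).const_smul (2 : ℝ))).sub (((((Hψ1.hasX x y t).mmul (Hφ.hasX x y t)).mmul (Hψ.hasX x y t)).mmul (Hφ.hasX x y t)).const_smul (4 : ℝ))).deriv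

  have hqy : ∀ x y t : ℝ, pdy (q) x y t = ((((2 : ℝ) • ((mmul (pdy (pdx ψ) x y t) (pdx φ x y t)) + (mmul (pdx ψ x y t) (pdy (pdx φ) x y t)))) - ((2 : ℝ) • ((mmul (pdy (pdx (pdx ψ)) x y t) (φ x y t)) + (mmul (pdx (pdx ψ) x y t) (pdy φ x y t))))) - ((4 : ℝ) • ((mmul ((mmul ((mmul (pdy (pdx ψ) x y t) (φ x y t)) + (mmul (pdx ψ x y t) (pdy φ x y t))) (ψ x y t)) + (mmul (mmul (pdx ψ x y t) (φ x y t)) (pdy ψ x y t))) (φ x y t)) + (mmul (mmul (mmul (pdx ψ x y t) (φ x y t)) (ψ x y t)) (pdy φ x y t))))) := by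
    intro x y t
    have e : (fun s => (q) x s t) = (fun s => ((((2 : ℝ) • (mmul (pdx ψ x s t) (pdx φ x s t))) - ((2 : ℝ) • (mmul (pdx (pdx ψ) x s t) (φ x s t)))) - ((4 : ℝ) • (mmul (mmul (mmul (pdx ψ x s t) (φ x s t)) (ψ x s t)) (φ x s t))))) :=
      funext fun s => hq x s t
    show deriv (fun s => (q) x s t) y = _
    rw [e]
    exact (((((Hψ1.hasY x y t).mmul (Hφ1.hasY x y t)).const_smul (2 : ℝ)).sub (((Hψ2.hasY x y t).mmul (Hφ.hasY x y t)).const_smul (2 : ℝ))).sub (((((Hψ1.hasY x y t).mmul (Hφ.hasY x y t)).mmul (Hψ.hasY x y t)).mmul (Hφ.hasY x y t)).const_smul (4 : ℝ))).deriv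

  have hψyx : ∀ x y t : ℝ, pdx (pdy ψ) x y t = ((pdx (pdx (pdx ψ)) x y t) + ((2 : ℝ) • ((mmul ((mmul (pdx (pdx ψ) x y t) (φ x y t)) + (mmul (pdx ψ x y t) (pdx φ x y t))) (ψ x y t)) + (mmul (mmul (pdx ψ x y t) (φ x y t)) (pdx ψ x y t))))) := by
    intro x y t
    have e : (fun s => (pdy ψ) s y t) = (fun s => ((pdx (pdx ψ) s y t) + ((2 : ℝ) • (mmul (mmul (pdx ψ s y t) (φ s y t)) (ψ s y t))))) :=
      funext fun s => hDNLS₁ s y t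
    show deriv (fun s => (pdy ψ) s y t) x = _
    rw [e]
    exact ((Hψ2.hasX x y t).add ((((Hψ1.hasX x y t).mmul (Hφ.hasX x y t)).mmul (Hψ.hasX x y t)).const_smul (2 : ℝ))).deriv

  have hψxy : ∀ x y t : ℝ, pdy (pdx ψ) x y t = ((pdx (pdx (pdx ψ)) x y t) + ((2 : ℝ) • ((mmul ((mmul (pdx (pdx ψ) x y t) (φ x y t)) + (mmul (pdx ψ x y t) (pdx φ x y t))) (ψ x y t)) + (mmul (mmul (pdx ψ x y t) (φ x y t)) (pdx ψ x y t))))) :=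
    fun x y t => (Hψ.schwarz_xy x y t).trans (hψyx x y t)

  have hψxyx : ∀ x y t : ℝ, pdx (pdy (pdx ψ)) x y t = ((pdx (pdx (pdx (pdx ψ))) x y t) + ((2 : ℝ) • (((mmul (((mmul (pdx (pdx (pdx ψ)) x y t) (φ x y t)) + (mmul (pdx (pdx ψ) x y t) (pdx φ x y t))) + ((mmul (pdx (pdx ψ) x y t) (pdx φ x y t)) + (mmul (pdx ψ x y t) (pdx (pdx φ) x y t)))) (ψ x y t)) + (mmul ((mmul (pdx (pdx ψ) x y t) (φ x y t)) + (mmul (pdx ψ x y t) (pdx φ x y t))) (pdx ψ x y t))) + ((mmul ((mmul (pdx (pdx ψ) x y t) (φ x y t)) + (mmul (pdx ψ x y t) (pdx φ x y t))) (pdx ψ x y t)) + (mmul (mmul (pdx ψ x y t) (φ x y t)) (pdx (pdx ψ) x y t)))))) := by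
    intro x y t
    have e : (fun s => (pdy (pdx ψ)) s y t) = (fun s => ((pdx (pdx (pdx ψ)) s y t) + ((2 : ℝ) • ((mmul ((mmul (pdx (pdx ψ) s y t) (φ s y t)) + (mmul (pdx ψ s y t) (pdx φ s y t))) (ψ s y t)) + (mmul (mmul (pdx ψ s y t) (φ s y t)) (pdx ψ s y t)))))) :=
      funext fun s => hψxy s y t
    show deriv (fun s => (pdy (pdx ψ)) s y t) x = _
    rw [e]
    exact ((Hψ3.hasX x y t).add ((((((Hψ2.hasX x y t).mmul (Hφ.hasX x y t)).add ((Hψ1.hasX x y t).mmul (Hφ1.hasX x y t))).mmul (Hψ.hasX x y t)).add (((Hψ1.hasX x y t).mmul (Hφ.hasX x y t)).mmul (Hψ1.hasX x y t))).const_smul (2 : ℝ))).deriv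

  have hψxxy : ∀ x y t : ℝ, pdy (pdx (pdx ψ)) x y t = ((pdx (pdx (pdx (pdx ψ))) x y t) + ((2 : ℝ) • (((mmul (((mmul (pdx (pdx (pdx ψ)) x y t) (φ x y t)) + (mmul (pdx (pdx ψ) x y t) (pdx φ x y t))) + ((mmul (pdx (pdx ψ) x y t) (pdx φ x y t)) + (mmul (pdx ψ x y t) (pdx (pdx φ) x y t)))) (ψ x y t)) + (mmul ((mmul (pdx (pdx ψ) x y t) (φ x y t)) + (mmul (pdx ψ x y t) (pdx φ x y t))) (pdx ψ x y t))) + ((mmul ((mmul (pdx (pdx ψ) x y t) (φ x y t)) + (mmul (pdx ψ x y t) (pdx φ x y t))) (pdx ψ x y t)) + (mmul (mmul (pdx ψ x y t) (φ x y t)) (pdx (pdx ψ) x y t)))))) :=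
    fun x y t => (Hψ1.schwarz_xy x y t).trans (hψxyx x y t)

  have hφyx : ∀ x y t : ℝ, pdx (pdy φ) x y t = ((-(pdx (pdx (pdx φ)) x y t)) + ((2 : ℝ) • ((mmul ((mmul (pdx φ x y t) (ψ x y t)) + (mmul (φ x y t) (pdx ψ x y t))) (pdx φ x y t)) + (mmul (mmul (φ x y t) (ψ x y t)) (pdx (pdx φ) x y t))))) := by
    intro x y t
    have e : (fun s => (pdy φ) s y t) = (fun s => ((-(pdx (pdx φ) s y t)) + ((2 : ℝ) • (mmul (mmul (φ s y t) (ψ s y t)) (pdx φ s y t))))) :=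
      funext fun s => hDNLS₂ s y t
    show deriv (fun s => (pdy φ) s y t) x = _
    rw [e]
    exact (((Hφ2.hasX x y t).neg).add ((((Hφ.hasX x y t).mmul (Hψ.hasX x y t)).mmul (Hφ1.hasX x y t)).const_smul (2 : ℝ))).deriv

  have hφxy : ∀ x y t : ℝ, pdy (pdx φ) x y t = ((-(pdx (pdx (pdx φ)) x y t)) + ((2 : ℝ) • ((mmul ((mmul (pdx φ x y t) (ψ x y t)) + (mmul (φ x y t) (pdx ψ x y t))) (pdx φ x y t)) + (mmul (mmul (φ x y t) (ψ x y t)) (pdx (pdx φ) x y t))))) :=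
    fun x y t => (Hφ.schwarz_xy x y t).trans (hφyx x y t)

  have hψtx : ∀ x y t : ℝ, pdx (pdt ψ) x y t = ((((pdx (pdx (pdx (pdx ψ))) x y t) + ((3 : ℝ) • ((mmul ((mmul (pdx (pdx (pdx ψ)) x y t) (φ x y t)) + (mmul (pdx (pdx ψ) x y t) (pdx φ x y t))) (ψ x y t)) + (mmul (mmul (pdx (pdx ψ) x y t) (φ x y t)) (pdx ψ x y t))))) + ((3 : ℝ) • ((mmul ((mmul (pdx (pdx ψ) x y t) (φ x y t)) + (mmul (pdx ψ x y t) (pdx φ x y t))) (pdx ψ x y t)) + (mmul (mmul (pdx ψ x y t) (φ x y t)) (pdx (pdx ψ) x y t))))) + ((3 : ℝ) • ((mmul ((mmul ((mmul ((mmul (pdx (pdx ψ) x y t) (φ x y t)) + (mmul (pdx ψ x y t) (pdx φ x y t))) (ψ x y t)) + (mmul (mmul (pdx ψ x y t) (φ x y t)) (pdx ψ x y t))) (φ x y t)) + (mmul (mmul (mmul (pdx ψ x y t) (φ x y t)) (ψ x y t)) (pdx φ x y t))) (ψ x y t)) + (mmul (mmul (mmul (mmul (pdx ψ x y t) (φ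 x y t)) (ψ x y t)) (φ x y t)) (pdx ψ x y t))))) := by
    intro x y t
    have e : (fun s => (pdt ψ) s y t) = (fun s => ((((pdx (pdx (pdx ψ)) s y t) + ((3 : ℝ) • (mmul (mmul (pdx (pdx ψ) s y t) (φ s y t)) (ψ s y t)))) + ((3 : ℝ) • (mmul (mmul (pdx ψ s y t) (φ s y t)) (pdx ψ s y t)))) + ((3 : ℝ) • (mmul (mmul (mmul (mmul (pdx ψ s y t) (φ s y t)) (ψ s y t)) (φ s y t)) (ψ s y t))))) :=
      funext fun s => hSym₁ s y t
    show deriv (fun s => (pdt ψ) s y t) x = _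
    rw [e]
    exact ((((Hψ3.hasX x y t).add ((((Hψ2.hasX x y t).mmul (Hφ.hasX x y t)).mmul (Hψ.hasX x y t)).const_smul (3 : ℝ))).add ((((Hψ1.hasX x y t).mmul (Hφ.hasX x y t)).mmul (Hψ1.hasX x y t)).const_smul (3 : ℝ))).add ((((((Hψ1.hasX x y t).mmul (Hφ.hasX x y t)).mmul (Hψ.hasX x y t)).mmul (Hφ.hasX x y t)).mmul (Hψ.hasX x y t)).const_smul (3 : ℝ))).deriv

  have hψxt : ∀ x y t : ℝ, pdt (pdx ψ) x y t = ((((pdx (pdx (pdx (pdx ψ))) x y t) + ((3 : ℝ) • ((mmul ((mmul (pdx (pdx (pdx ψ)) x y t) (φ x y t)) + (mmul (pdx (pdx ψ) x y t) (pdx φ x y t))) (ψ x y t)) + (mmul (mmul (pdx (pdx ψ) x y t) (φ x y t)) (pdx ψ x y t))))) + ((3 : ℝ) • ((mmul ((mmul (pdx (pdx ψ) x y t) (φ x y t)) + (mmul (pdx ψ x y t) (pdx φ x y t))) (pdx ψ x y t)) + (mmul (mmul (pdx ψ x y t) (φ x y t)) (pdx (pdx ψ) x y t))))) + ((3 : ℝ)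 • ((mmul ((mmul ((mmul ((mmul (pdx (pdx ψ) x y t) (φ x y t)) + (mmul (pdx ψ x y t) (pdx φ x y t))) (ψ x y t)) + (mmul (mmul (pdx ψ x y t) (φ x y t)) (pdx ψ x y t))) (φ x y t)) + (mmul (mmul (mmul (pdx ψ x y t) (φ x y t)) (ψ x y t)) (pdx φ x y t))) (ψ x y t)) + (mmul (mmul (mmul (mmul (pdx ψ x y t) (φ x y t)) (ψ x y t)) (φ x y t)) (pdx ψ x y t))))) :=
    fun x y t => (Hψ.schwarz_xt x y t).trans (hψtx x y t)

  refine ⟨?_, ?_, ?_, ?_⟩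
  · intro x y t
    rw [hut x y t, hψxt x y t, hSym₂ x y t, huxxx x y t, hqy x y t, hψxy x y t, hφxy x y t,
      hψxxy x y t, hDNLS₁ x y t, hDNLS₂ x y t, mcomm, hq x y t, hu x y t, hux x y t]
    simp only [mmul_add, add_mmul, mmul_smul, smul_mmul, mmul_sub, sub_mmul, mmul_neg, neg_mmul,
      mmul_assoc, smul_add, smul_sub, smul_smul, smul_neg, neg_smul]
    module
  · intro x y t
    rw [hqx x y t, huy x y t, hψxy x y t, hDNLS₂ x y t]
    simp only [mmul_add, add_mmul, mmul_smul, smul_mmul, mmul_sub, sub_mmul, mmul_neg, neg_mmul,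
      mmul_assoc, smul_add, smul_sub, smul_smul, smul_neg, neg_smul]
    module
  · intro x y t
    rw [hDNLS₁ x y t, hu x y t]
    simp only [mmul_add, add_mmul, mmul_smul, smul_mmul, mmul_sub, sub_mmul, mmul_neg, neg_mmul,
      mmul_assoc, smul_add, smul_sub, smul_smul, smul_neg, neg_smul]
    module
  · intro x y t
    rw [hSym₁ x y t, hu x y t, hux x y t, hq x y t]
    simp only [mmul_add, add_mmul, mmul_smul, smul_mmul, mmul_sub, sub_mmul, mmul_neg, neg_mmul,
      mmul_assoc, smul_add, smul_sub, smul_smul, smul_neg, neg_smul]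
    module
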